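/- arXiv:1707.01010 — 3 statements merged into one kernel-verified Lean document; each statement's English description precedes it below -/
import Mathlib

section
/- A primitive word w is not ins-robust if and only if w can be written as u^r u₁ u₂ u^s, where u = u₁ c u₂ is primitive for some letter c ∈ V, u₁, u₂ ∈ V*, r, s ≥ 0, and r + s ≥ 1. -/
/-- `wpow v n` is the word `v` repeated `n` times. -/
def wpow {V : Type*} (v : List V) : ℕ → List V
  | 0 => []
  | n + 1 => v ++ wpow v n

/-- A word is primitive if it is nonempty and not a proper power. -/
def Primitive {V : Type*} (w : List V) : Prop :=
  w ≠ [] ∧ ∀ (v : List V) (n : ℕ), w = wpow v n → n = 1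

/-- A word is ins-robust if it is primitive and inserting any letter at any
position yields a primitive word. -/
def InsRobust {V : Type*} (w : List V) : Prop :=
  Primitive w ∧ ∀ (x y : List V) (a : V), w = x ++ y → Primitive (x ++ a :: y)

/-- `HasPeriod w p` : the word `w` is periodic with period `p`. -/
def HasPeriod {V : Type*} (w : List V) (p : ℕ) : Prop :=
  ∀ i, i + p < w.length → w[i]? = w[i + p]?

lemma wpow_nil {V : Type*} : ∀ n, wpow ([] : List V) n = []
  | 0 => rfl
  | n + 1 => by simp [wpow, wpow_nil n]

lemma wpow_one {V : Type*} (v : List V) : wpow v 1 = v := by simp [wpow]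

lemma wpow_add {V : Type*} (v : List V) (m n : ℕ) :
    wpow v (m + n) = wpow v m ++ wpow v n := by
  induction m with
  | zero => simp [wpow]
  | succ m ih => rw [Nat.succ_add, wpow, wpow, ih, List.append_assoc]

lemma wpow_mul {V : Type*} (v : List V) (k n : ℕ) :
    wpow (wpow v k) n = wpow v (k * n) := by
  induction n with
  | zero => simp [wpow]
  | succ n ih => rw [wpow, ih, Nat.mul_succ, Nat.add_comm, wpow_add]

lemma wpow_length {V : Type*} (v : List V) : ∀ n, (wpow v n).length = n * v.length
  | 0 => by simp [wpow]
  | n + 1 => by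
    rw [wpow, List.length_append, wpow_length v n, Nat.succ_mul, Nat.add_comm]

/-- Every nonempty word is a positive power of a primitive word. -/
lemma prim_root_aux {V : Type*} : ∀ (N : ℕ) (w : List V), w.length ≤ N → w ≠ [] →
    ∃ u k, Primitive u ∧ 1 ≤ k ∧ w = wpow u k := by
  intro N
  induction N with
  | zero =>
    intro w hN hw
    exact absurd (List.length_eq_zero_iff.mp (Nat.le_zero.mp hN)) hw
  | succ N ih =>
    intro w hN hw
    by_cases hp : Primitive w
    · exact ⟨w, 1, hp, le_refl 1, (wpow_one w).symm⟩
    · simp only [Primitive, not_and, not_forall] at hp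
      obtain ⟨v, n, hvn, hn1⟩ := hp hw
      have hn0 : n ≠ 0 := by
        rintro rfl; exact hw (by simpa [wpow] using hvn)
      have hv0 : v ≠ [] := by
        rintro rfl; exact hw (by simpa [wpow_nil] using hvn)
      have hn2 : 2 ≤ n := by omega
      have hlen : v.length < w.length := by
        rw [hvn, wpow_length]
        have hvl : 0 < v.length := List.length_pos_iff.mpr hv0
        calc v.length = 1 * v.length := (Nat.one_mul _).symm
        _ < n * v.length := by
          apply Nat.mul_lt_mul_of_lt_of_le <;> omega
      obtain ⟨u, k, hu, hk, hvu⟩ := ih v (by omega) hv0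
      refine ⟨u, k * n, hu, ?_, ?_⟩
      · have := Nat.mul_le_mul hk hn2; omega
      · rw [hvn, hvu, wpow_mul]

lemma prim_root {V : Type*} (w : List V) (hw : w ≠ []) :
    ∃ u k, Primitive u ∧ 1 ≤ k ∧ w = wpow u k :=
  prim_root_aux w.length w le_rfl hw

/-- Splitting off a letter from a power. -/
lemma split_wpow {V : Type*} (u : List V) :
    ∀ (m : ℕ) (x y : List V) (a : V), x ++ a :: y = wpow u m →
    ∃ u₁ u₂ r s, u = u₁ ++ a :: u₂ ∧ r + s + 1 = m ∧
      x = wpow u r ++ u₁ ∧ y = u₂ ++ wpow u s := by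
  intro m
  induction m with
  | zero => intro x y a h; simp [wpow] at h
  | succ m ih =>
    intro x y a h
    rw [wpow] at h
    rcases List.append_eq_append_iff.mp h with ⟨t, hu, ht⟩ | ⟨t, hx, ht⟩
    · cases t with
      | nil =>
        obtain ⟨u₁, u₂, r, s, h1, h2, h3, h4⟩ := ih [] y a (by simpa using ht)
        refine ⟨u₁, u₂, r + 1, s, h1, by omega, ?_, h4⟩
        rw [wpow, List.append_assoc, ← h3, List.append_nil, hu, List.append_nil]
      | cons b t =>
        obtain ⟨rfl, rfl⟩ : a = b ∧ y = t ++ wpow u m := by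
          simpa using ht
        refine ⟨x, t, 0, m, by simpa using hu, by omega, by simp [wpow], rfl⟩
    · obtain ⟨u₁, u₂, r, s, h1, h2, h3, h4⟩ := ih t y a ht.symm
      refine ⟨u₁, u₂, r + 1, s, h1, by omega, ?_, h4⟩
      rw [hx, h3, wpow, List.append_assoc]

theorem stmt2 {V : Type*} (hV : ∃ a b : V, a ≠ b) (w : List V) (hw : Primitive w) :
    ¬ InsRobust w ↔ ∃ (u₁ u₂ : List V) (c : V) (r s : ℕ),
      Primitive (u₁ ++ c :: u₂) ∧ 1 ≤ r + s ∧
      w = wpow (u₁ ++ c :: u₂) r ++ u₁ ++ u₂ ++ wpow (u₁ ++ c :: u₂) s := by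
  constructor
  · intro h
    simp only [InsRobust, not_and, not_forall] at h
    obtain ⟨x, y, a, hxy, hnp⟩ := h hw
    have hne : x ++ a :: y ≠ [] := by simp
    simp only [Primitive, not_and, not_forall] at hnp
    obtain ⟨v, n, hvn, hn1⟩ := hnp hne
    have hn0 : n ≠ 0 := by rintro rfl; exact hne (by simpa [wpow] using hvn)
    have hv0 : v ≠ [] := by rintro rfl; exact hne (by simpa [wpow_nil] using hvn)
    obtain ⟨u, k, hu, hk, hvu⟩ := prim_root v hv0
    have hm : x ++ a :: y = wpow u (k * n) := by rw [hvn, hvu, wpow_mul]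
    obtain ⟨u₁, u₂, r, s, h1, h2, h3, h4⟩ := split_wpow u (k * n) x y a hm
    have hkn : 2 ≤ k * n := by
      have := Nat.mul_le_mul hk (show 2 ≤ n by omega); omega
    refine ⟨u₁, u₂, a, r, s, h1 ▸ hu, by omega, ?_⟩
    rw [hxy, h3, h4, ← h1]
    simp [List.append_assoc]
  · rintro ⟨u₁, u₂, c, r, s, hu, hrs, hw'⟩
    intro hins
    have := hins.2 (wpow (u₁ ++ c :: u₂) r ++ u₁) (u₂ ++ wpow (u₁ ++ c :: u₂) s) c
      (by rw [hw']; simp [List.append_assoc])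
    have heq : (wpow (u₁ ++ c :: u₂) r ++ u₁) ++ c :: (u₂ ++ wpow (u₁ ++ c :: u₂) s)
        = wpow (u₁ ++ c :: u₂) (r + 1 + s) := by
      rw [wpow_add, wpow_add, wpow_one]
      simp [List.append_assoc]
    have := this.2 _ _ heq
    omega
end

section
/- If w is an ins-robust primitive word, then the reversal rev(w) is an ins-robust primitive word. -/
lemma wpow_succ' {V : Type*} (v : List V) (k : ℕ) :
    wpow v (k+1) = wpow v k ++ v := by
  induction k with
  | zero => simp [wpow]
  | succ m ihm =>
    show v ++ wpow v (m+1) = (v ++ wpow v m) ++ v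
    rw [ihm, List.append_assoc]

lemma wpow_reverse {V : Type*} (v : List V) (n : ℕ) :
    (wpow v n).reverse = wpow v.reverse n := by
  induction n with
  | zero => simp [wpow]
  | succ k ih =>
    rw [wpow_succ' v.reverse]
    show (v ++ wpow v k).reverse = _
    rw [List.reverse_append, ih]

lemma primitive_reverse {V : Type*} {w : List V} (h : Primitive w) :
    Primitive w.reverse := by
  refine ⟨by simpa using h.1, fun v n hv => ?_⟩
  apply h.2 v.reverse n
  have := congrArg List.reverse hv
  simpa [wpow_reverse] using this

theorem stmt4 {V : Type*} (w : List V) (h : InsRobust w) : InsRobust w.reverse := by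
  refine ⟨primitive_reverse h.1, fun x y a hxy => ?_⟩
  have hw : w = y.reverse ++ x.reverse := by
    have := congrArg List.reverse hxy
    simpa using this
  have hp := h.2 y.reverse x.reverse a hw
  have := primitive_reverse hp
  simpa using this
end

section
/- For n ≥ 2 and distinct letters a, b, the word a^n b a^m b is an ins-robust primitive word whenever m > n + 1 and m ≠ 2n, while (a^m b)² = a^m b a^m b is not ins-robust (being non-primitive). -/
/-! A proper power `v ^ k` containing a prime number `q` of letters `b` is `v ^ q` with a single
`b` in `v = s b t`, so its `b`-free blocks are `s, ts, …, ts, t`: every inner block is as long as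
the two outer blocks together. Inserting a letter into `a^n b a^m b` gives either two `b`'s with
blocks of lengths `(n+1, m, 0)`, `(n, m+1, 0)`, `(n, m, 1)`, or three `b`'s with blocks `(i, j, m, 0)`
(`i + j = n`), `(n, i, j, 0)` (`i + j = m`), `(n, m, 0, 0)`; `n + 1 < m` and `m ≠ 2n` exclude the
square and cube patterns in each case. -/

open List

section Words

variable {V : Type*}

theorem wpow_singleton (a : V) (n : ℕ) : wpow [a] n = replicate n a := by
  induction n with
  | zero => rfl
  | succ n ih => rw [wpow, ih, replicate_succ, singleton_append]

theorem count_wpow [DecidableEq V] (b : V) (v : List V) (k : ℕ) :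
    (wpow v k).count b = k * v.count b := by
  induction k with
  | zero => simp [wpow]
  | succ k ih => rw [wpow, count_append, ih]; ring

theorem not_primitive_wpow (v : List V) {k : ℕ} (hk : k ≠ 1) : ¬Primitive (wpow v k) :=
  fun h => hk (h.2 v k rfl)

theorem not_insRobust_append_self (v : List V) : ¬InsRobust (v ++ v) := fun h =>
  not_primitive_wpow v (by norm_num : 2 ≠ 1) (by simpa [wpow] using h.1)

theorem eq_count_of_eq_wpow [DecidableEq V] {b : V} {w v : List V} {k : ℕ} (hw : w = wpow v k)
    (hk : k ≠ 1) (hp : (w.count b).Prime) : k = w.count b :=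
  (hp.eq_one_or_self_of_dvd k ⟨v.count b, by rw [hw, count_wpow]⟩).resolve_left hk

theorem exists_eq_append_cons_of_count_eq_one [DecidableEq V] {b : V} {v : List V}
    (h : v.count b = 1) : ∃ s t, b ∉ s ∧ b ∉ t ∧ v = s ++ b :: t := by
  obtain ⟨s, t, rfl⟩ := append_of_mem (count_pos_iff.1 (by omega : 0 < v.count b))
  simp only [count_append, count_cons_self] at h
  exact ⟨s, t, count_eq_zero.1 (by omega), count_eq_zero.1 (by omega), rfl⟩

theorem append_cons_inj_of_notMem_left {b : V} {x₁ x₂ z₁ z₂ : List V} (h₁ : b ∉ x₁)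
    (h₂ : b ∉ x₂) (h : x₁ ++ b :: z₁ = x₂ ++ b :: z₂) : x₁ = x₂ ∧ z₁ = z₂ := by
  classical
  have hlen : x₁.length = x₂.length := by
    simpa [idxOf_append_of_notMem h₁, idxOf_append_of_notMem h₂] using congrArg (idxOf b) h
  simpa using append_inj h hlen

theorem length_eq_add_of_eq_append_self {b : V} {u₁ u₂ u₃ v : List V} (h₁ : b ∉ u₁)
    (h₂ : b ∉ u₂) (h₃ : b ∉ u₃) (h : u₁ ++ b :: u₂ ++ b :: u₃ = v ++ v) :
    u₂.length = u₁.length + u₃.length := by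
  classical
  have hv : v.count b = 1 := by
    have := congrArg (count b) h
    simp [count_eq_zero.2, h₁, h₂, h₃] at this
    omega
  obtain ⟨s, t, hs, ht, rfl⟩ := exists_eq_append_cons_of_count_eq_one hv
  have hts : b ∉ t ++ s := by simp [hs, ht]
  obtain ⟨rfl, h'⟩ := append_cons_inj_of_notMem_left h₁ hs (by simpa using h)
  obtain ⟨rfl, rfl⟩ := append_cons_inj_of_notMem_left h₂ hts (by simpa using h')
  simp [add_comm]

theorem length_eq_add_of_eq_append_self_append_self {b : V} {u₁ u₂ u₃ u₄ v : List V}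
    (h₁ : b ∉ u₁) (h₂ : b ∉ u₂) (h₃ : b ∉ u₃) (h₄ : b ∉ u₄)
    (h : u₁ ++ b :: u₂ ++ b :: u₃ ++ b :: u₄ = v ++ v ++ v) :
    u₂.length = u₁.length + u₄.length ∧ u₃.length = u₂.length := by
  classical
  have hv : v.count b = 1 := by
    have := congrArg (count b) h
    simp [count_eq_zero.2, h₁, h₂, h₃, h₄] at this
    omega
  obtain ⟨s, t, hs, ht, rfl⟩ := exists_eq_append_cons_of_count_eq_one hv
  have hts : b ∉ t ++ s := by simp [hs, ht]
  obtain ⟨rfl, h'⟩ := append_cons_inj_of_notMem_left h₁ hs (by simpa using h)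
  obtain ⟨rfl, h''⟩ := append_cons_inj_of_notMem_left h₂ hts (by simpa using h')
  obtain ⟨rfl, rfl⟩ := append_cons_inj_of_notMem_left h₃ hts (by simpa using h'')
  simp [add_comm]

theorem primitive_of_two_blocks {b : V} {u₁ u₂ u₃ : List V} (h₁ : b ∉ u₁) (h₂ : b ∉ u₂)
    (h₃ : b ∉ u₃) (hlen : u₂.length ≠ u₁.length + u₃.length) :
    Primitive (u₁ ++ b :: u₂ ++ b :: u₃) := by
  classical
  refine ⟨by simp, fun v k hw => by_contra fun hk => hlen ?_⟩
  have hcount : (u₁ ++ b :: u₂ ++ b :: u₃).count b = 2 := by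
    simp [count_eq_zero.2, h₁, h₂, h₃]
  obtain rfl : k = 2 := hcount ▸ eq_count_of_eq_wpow hw hk (hcount ▸ Nat.prime_two)
  exact length_eq_add_of_eq_append_self h₁ h₂ h₃ (by simpa [wpow] using hw)

theorem primitive_of_three_blocks {b : V} {u₁ u₂ u₃ u₄ : List V} (h₁ : b ∉ u₁) (h₂ : b ∉ u₂)
    (h₃ : b ∉ u₃) (h₄ : b ∉ u₄)
    (hlen : u₂.length ≠ u₁.length + u₄.length ∨ u₃.length ≠ u₂.length) :
    Primitive (u₁ ++ b :: u₂ ++ b :: u₃ ++ b :: u₄) := by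
  classical
  refine ⟨by simp, fun v k hw => by_contra fun hk => ?_⟩
  have hcount : (u₁ ++ b :: u₂ ++ b :: u₃ ++ b :: u₄).count b = 3 := by
    simp [count_eq_zero.2, h₁, h₂, h₃, h₄]
  obtain rfl : k = 3 := hcount ▸ eq_count_of_eq_wpow hw hk (hcount ▸ Nat.prime_three)
  have := length_eq_add_of_eq_append_self_append_self h₁ h₂ h₃ h₄
    (by simpa [wpow] using hw)
  omega

theorem append_cons_cases_of_append_eq_append_cons {b : V} {x y u r : List V} (c : V)
    (h : x ++ y = u ++ b :: r) :
    (∃ u₁ u₂, u₁ ++ u₂ = u ∧ x ++ c :: y = u₁ ++ c :: u₂ ++ b :: r) ∨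
      ∃ r₁ r₂, r₁ ++ r₂ = r ∧ x ++ c :: y = u ++ b :: (r₁ ++ c :: r₂) := by
  rcases append_eq_append_iff.1 h with ⟨u₂, rfl, rfl⟩ | ⟨_ | ⟨d, r₁⟩, rfl, hy⟩
  · exact Or.inl ⟨x, u₂, rfl, by simp⟩
  · obtain rfl : b :: r = y := hy
    exact Or.inl ⟨u, [], by simp, by simp⟩
  · obtain ⟨rfl, rfl⟩ := cons_eq_cons.1 hy
    exact Or.inr ⟨r₁, y, rfl, by simp⟩

theorem append_cons_cases_of_append_eq_replicate_append_cons {a b c : V} {n : ℕ} {x y r : List V}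
    (h : x ++ y = replicate n a ++ b :: r) :
    (∃ i j, i + j = n ∧ x ++ c :: y = replicate i a ++ c :: replicate j a ++ b :: r) ∨
      ∃ r₁ r₂, r₁ ++ r₂ = r ∧ x ++ c :: y = replicate n a ++ b :: (r₁ ++ c :: r₂) := by
  refine (append_cons_cases_of_append_eq_append_cons c h).imp_left ?_
  rintro ⟨u₁, u₂, hu, hw⟩
  obtain ⟨hlen, hu₁, hu₂⟩ := append_eq_replicate_iff.1 hu
  rw [hu₁, hu₂] at hw
  exact ⟨_, _, hlen, hw⟩

theorem insRobust_replicate_append_cons {a b : V} (hab : a ≠ b) {n m : ℕ} (hm : n + 1 < m)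
    (hm2 : m ≠ 2 * n) : InsRobust (replicate n a ++ b :: (replicate m a ++ [b])) := by
  have hb : ∀ k, b ∉ replicate k a := fun k h => hab (eq_of_mem_replicate h).symm
  refine ⟨by simpa using primitive_of_two_blocks (hb n) (hb m) not_mem_nil (by simp; omega),
    fun x y c hxy => ?_⟩
  rcases append_cons_cases_of_append_eq_replicate_append_cons hxy.symm with
    ⟨i, j, hij, hw⟩ | ⟨r₁, r₂, hr, hw⟩
  · rw [hw]
    obtain rfl | hc := eq_or_ne c b
    · simpa using primitive_of_three_blocks (hb i) (hb j) (hb m) not_mem_nil (by simp; omega)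
    · simpa using primitive_of_two_blocks (u₁ := replicate i a ++ c :: replicate j a)
        (by simp [hb, hc.symm]) (hb m) not_mem_nil (by simp; omega)
  rcases append_cons_cases_of_append_eq_replicate_append_cons hr with
    ⟨i, j, hij, hr'⟩ | ⟨s₁, s₂, hs, hr'⟩
  · rw [hw, hr']
    obtain rfl | hc := eq_or_ne c b
    · simpa using primitive_of_three_blocks (hb n) (hb i) (hb j) not_mem_nil (by simp; omega)
    · simpa using primitive_of_two_blocks (u₂ := replicate i a ++ c :: replicate j a)
        (hb n) (by simp [hb, hc.symm]) not_mem_nil (by simp; omega)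
  · obtain ⟨rfl, rfl⟩ := append_eq_nil_iff.1 hs
    rw [hw, hr']
    obtain rfl | hc := eq_or_ne c b
    · simpa using primitive_of_three_blocks (hb n) (hb m) not_mem_nil not_mem_nil
        (by simp; omega)
    · simpa using primitive_of_two_blocks (u₃ := [c]) (hb n) (hb m) (by simp [hc.symm])
        (by simp; omega)

end Words

theorem stmt13_general {V : Type*} (a b : V) (hab : a ≠ b) (n m : ℕ)
    (hm : n + 1 < m) (hm2 : m ≠ 2 * n) :
    InsRobust (wpow [a] n ++ [b] ++ wpow [a] m ++ [b]) ∧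
    ¬ InsRobust (wpow [a] m ++ [b] ++ wpow [a] m ++ [b]) :=
  ⟨by simpa [wpow_singleton] using insRobust_replicate_append_cons hab hm hm2,
    by simpa using not_insRobust_append_self (wpow [a] m ++ [b])⟩

theorem stmt13 {V : Type*} (a b : V) (hab : a ≠ b) (n m : ℕ)
    (hn : 2 ≤ n) (hm : n + 1 < m) (hm2 : m ≠ 2 * n) :
    InsRobust (wpow [a] n ++ [b] ++ wpow [a] m ++ [b]) ∧
    ¬ InsRobust (wpow [a] m ++ [b] ++ wpow [a] m ++ [b]) :=
  stmt13_general a b hab n m hm hm2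
end
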